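/- Let X be a finite-dimensional K-vector space with a skew-symmetric bilinear form ω, let Y be a subspace of X, let x ∈ X, and let ψ : X → X be the affine map ψ(v) = v + x. Then, for any α ∈ X* and any subset S ⊆ Y with ω(s,s) = 0 for all s ∈ S, the map ψ induces a group isomorphism between the restriction of the affine transvection group Tr^{α+ω(x)}(S) to Y and the restriction of Tr^α(S) to the coset x + Y (both Y and x + Y being invariant under the respective groups). -/
import Mathlib


/-- Affine transvections `T^{α(s)}_{s,k} : x ↦ x + k(ω(x,s) + α(s))·s`. -/
def affTransvectionSet {K X : Type*} [Field K] [AddCommGroup X] [Module K X]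
    (ω : X →ₗ[K] X →ₗ[K] K) (S : Set X) (α : X → K) : Set (Equiv.Perm X) :=
  {f | ∃ s ∈ S, ∃ k : K, k ≠ 0 ∧ ∀ x, f x = x + (k * (ω x s + α s)) • s}

/-- The affine transvection group `Tr^α(S)`. -/
def affTransvectionGroup {K X : Type*} [Field K] [AddCommGroup X] [Module K X]
    (ω : X →ₗ[K] X →ₗ[K] K) (S : Set X) (α : X → K) : Subgroup (Equiv.Perm X) :=
  Subgroup.closure (affTransvectionSet ω S α)

/-- with `Y ≤ X` a subspace, `x ∈ X`, and `ψ(v) = v + x`: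
for every `α ∈ X*` and `S ⊆ Y` with `ω(s,s) = 0` on `S`, `Y` is invariant
under `Tr^{α+ω(x)}(S)`, the coset `x + Y` is invariant under `Tr^α(S)`, and
`ψ` induces a group isomorphism between the restriction of `Tr^{α+ω(x)}(S)`
to `Y` and the restriction of `Tr^α(S)` to `x + Y` (expressed by the
intertwining conditions in both directions). -/
theorem stmt8 {K X : Type*} [Field K] [AddCommGroup X] [Module K X]
    [FiniteDimensional K X]
    (ω : X →ₗ[K] X →ₗ[K] K) (hskew : ∀ x₁ x₂, ω x₁ x₂ = -ω x₂ x₁)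
    (Y : Submodule K X) (x : X) (α : Module.Dual K X)
    (S : Set X) (hSY : S ⊆ (Y : Set X)) (hS : ∀ s ∈ S, ω s s = 0) :
    -- `Y` is invariant under `Tr^{α+ω(x)}(S)`
    (∀ g ∈ affTransvectionGroup ω S ⇑(α + ω x), ∀ v ∈ Y, g v ∈ Y) ∧
    -- `x + Y` is invariant under `Tr^α(S)`
    (∀ g ∈ affTransvectionGroup ω S ⇑α, ∀ v, v - x ∈ Y → g v - x ∈ Y) ∧
    -- `ψ : v ↦ v + x` intertwines the two restricted actions in both directions
    (∀ g ∈ affTransvectionGroup ω S ⇑(α + ω x),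
      ∃ h ∈ affTransvectionGroup ω S ⇑α, ∀ v ∈ Y, h (v + x) = g v + x) ∧
    (∀ h ∈ affTransvectionGroup ω S ⇑α,
      ∃ g ∈ affTransvectionGroup ω S ⇑(α + ω x), ∀ v ∈ Y, h (v + x) = g v + x) := by
  classical
  set τ : Equiv.Perm X := Equiv.addRight x with hτdef
  have conj_app : ∀ (g : Equiv.Perm X) (v : X), (τ * g * τ⁻¹) v = g (v - x) + x := by
    intro g v
    simp [hτdef, Equiv.Perm.mul_apply, sub_eq_add_neg]
  have conj_app' : ∀ (g : Equiv.Perm X) (v : X), (τ⁻¹ * g * τ) v = g (v + x) - x := by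
    intro g v
    simp [hτdef, Equiv.Perm.mul_apply, sub_eq_add_neg]
  -- generators transform
  have hgen : ∀ g ∈ affTransvectionSet ω S ⇑(α + ω x),
      (τ * g * τ⁻¹) ∈ affTransvectionSet ω S ⇑α := by
    rintro g ⟨s, hs, k, hk, hg⟩
    refine ⟨s, hs, k, hk, fun v => ?_⟩
    rw [conj_app, hg (v - x)]
    have h1 : (ω (v - x)) s = ω v s - ω x s := by simp [map_sub]
    have h2 : (⇑(α + ω x)) s = α s + ω x s := rfl
    rw [h1, h2]
    have : k * (ω v s - ω x s + (α s + ω x s)) = k * (ω v s + α s) := by ring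
    rw [this]; abel
  have hgen' : ∀ g ∈ affTransvectionSet ω S ⇑α,
      (τ⁻¹ * g * τ) ∈ affTransvectionSet ω S ⇑(α + ω x) := by
    rintro g ⟨s, hs, k, hk, hg⟩
    refine ⟨s, hs, k, hk, fun v => ?_⟩
    rw [conj_app', hg (v + x)]
    have h1 : (ω (v + x)) s = ω v s + ω x s := by simp [map_add]
    have h2 : (⇑(α + ω x)) s = α s + ω x s := rfl
    rw [h1, h2]
    have : k * (ω v s + ω x s + α s) = k * (ω v s + (α s + ω x s)) := by ring
    rw [this]; abel
  -- conjugation carries the groups to each other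
  have φconj : ∀ g ∈ affTransvectionGroup ω S ⇑(α + ω x),
      τ * g * τ⁻¹ ∈ affTransvectionGroup ω S ⇑α := by
    intro g hg
    have : (affTransvectionGroup ω S ⇑(α + ω x)).map (MulAut.conj τ).toMonoidHom ≤
        affTransvectionGroup ω S ⇑α := by
      rw [affTransvectionGroup, MonoidHom.map_closure]
      apply Subgroup.closure_mono
      rintro f ⟨g', hg', rfl⟩
      exact hgen g' hg'
    have hm : (MulAut.conj τ).toMonoidHom g ∈
        (affTransvectionGroup ω S ⇑(α + ω x)).map (MulAut.conj τ).toMonoidHom :=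
      Subgroup.mem_map_of_mem _ hg
    simpa using this hm
  have φconj' : ∀ g ∈ affTransvectionGroup ω S ⇑α,
      τ⁻¹ * g * τ ∈ affTransvectionGroup ω S ⇑(α + ω x) := by
    intro g hg
    have : (affTransvectionGroup ω S ⇑α).map (MulAut.conj τ⁻¹).toMonoidHom ≤
        affTransvectionGroup ω S ⇑(α + ω x) := by
      rw [affTransvectionGroup, MonoidHom.map_closure]
      apply Subgroup.closure_mono
      rintro f ⟨g', hg', rfl⟩
      simpa using hgen' g' hg'
    have hm : (MulAut.conj τ⁻¹).toMonoidHom g ∈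
        (affTransvectionGroup ω S ⇑α).map (MulAut.conj τ⁻¹).toMonoidHom :=
      Subgroup.mem_map_of_mem _ hg
    simpa using this hm
  -- invariance of Y under G₁
  have hinv : ∀ g ∈ affTransvectionGroup ω S ⇑(α + ω x), ∀ v, g v ∈ Y ↔ v ∈ Y := by
    intro g hg
    refine Subgroup.closure_induction (p := fun g _ => ∀ v, g v ∈ Y ↔ v ∈ Y)
      ?_ ?_ ?_ ?_ hg
    · rintro f ⟨s, hs, k, hk, hf⟩ v
      have hsY := hSY hs
      constructor
      · intro h
        have : v = f v - (k * (ω v s + (α + ω x) s)) • s := by rw [hf v]; abel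
        rw [this]
        exact Y.sub_mem h (Y.smul_mem _ hsY)
      · intro h
        rw [hf v]
        exact Y.add_mem h (Y.smul_mem _ hsY)
    · intro v; simp
    · intro a b _ _ ha hb v
      rw [Equiv.Perm.mul_apply]
      exact (ha _).trans (hb v)
    · intro a _ ha v
      have := ha (a⁻¹ v)
      simpa using this.symm
  refine ⟨fun g hg v hv => (hinv g hg v).mpr hv, ?_, ?_, ?_⟩
  · intro g hg v hv
    have h1 := φconj' g hg
    have h2 := (hinv _ h1 (v - x)).mpr hv
    rwa [conj_app', sub_add_cancel] at h2
  · intro g hg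
    refine ⟨τ * g * τ⁻¹, φconj g hg, fun v _ => ?_⟩
    rw [conj_app, add_sub_cancel_right]
  · intro h hh
    refine ⟨τ⁻¹ * h * τ, φconj' h hh, fun v _ => ?_⟩
    rw [conj_app', sub_add_cancel]
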